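/- Let f : F^n → F be in layered canalizing form with r layers of sizes k_1, …, k_r and canalizing input sets S_{i,j}, let x_s be the s-th variable of the ℓ-th layer, and let a ∈ F. Then the number of transitions changed by constantly expressing x_s to a satisfies #{x ∈ F^n : f(x_1, …, x_{s−1}, a, x_{s+1}, …, x_n) ≠ f(x)} ≤ p^{n − (k_1 + ⋯ + k_ℓ)} · (∏_{i=1}^{ℓ−1} ∏_{j=1}^{k_i} (p − |S_{i,j}|)) · (∏_{j=1, j ≠ s}^{k_ℓ} (p − |S_{ℓ,j}|)) · (p − R), where R = |S_{ℓ,s}| if a ∈ S_{ℓ,s} and R = p − |S_{ℓ,s}| if a ∉ S_{ℓ,s}. -/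

import Mathlib

open Finset

/-- Indicator function of the complement of `S`: `Qt S x = 1` if `x ∉ S`, `0` if `x ∈ S`. -/
def Qt {F : Type*} [Fintype F] [DecidableEq F] [Zero F] [One F] (S : Finset F) (x : F) : F :=
  if x ∈ S then 0 else 1

/-- `g` actually depends on (is essential in) its `i`-th variable. -/
def DependsOnVar {F : Type*} (n : ℕ) (g : (Fin n → F) → F) (i : Fin n) : Prop :=
  ∃ x y : Fin n → F, (∀ j, j ≠ i → x j = y j) ∧ g x ≠ g y

/-- `g` is canalizing in its `i`-th variable with canalizing input set `S`
(a nonempty proper subset of `F`) and canalizing output `b`. -/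
def Canalizing {F : Type*} [Fintype F] [DecidableEq F] (n : ℕ) (g : (Fin n → F) → F)
    (i : Fin n) (S : Finset F) (b : F) : Prop :=
  S.Nonempty ∧ S ≠ Finset.univ ∧ ∀ x : Fin n → F, x i ∈ S → g x = b

/-- `f` is 1-canalizing in its `i`-th variable with canalizing input set `S`
(a nonempty proper subset of `F`) and canalizing output `b`: `f = b` whenever `x i ∈ S`,
and on `x i ∉ S` the value of `f` is given by a single function of the remaining variables
which is not identically `b`. -/
def OneCanalizing {F : Type*} [Fintype F] [DecidableEq F] (n : ℕ) (f : (Fin n → F) → F)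
    (i : Fin n) (S : Finset F) (b : F) : Prop :=
  S.Nonempty ∧ S ≠ Finset.univ ∧
  (∀ x : Fin n → F, x i ∈ S → f x = b) ∧
  (∀ x y : Fin n → F, x i ∉ S → y i ∉ S → (∀ j, j ≠ i → x j = y j) → f x = f y) ∧
  (∃ x : Fin n → F, x i ∉ S ∧ f x ≠ b)

/-- Nested evaluation `M₁(M₂(⋯(M_r · P + B_r)⋯) + B₂) + B₁`. -/
def nestEval {F : Type*} [Mul F] [Add F] : List (F × F) → F → F
  | [], P => P
  | (m, b) :: t, P => m * nestEval t P + b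

/-- Layered canalizing form data for a function of `n` variables with `r ≥ 1` layers:
pairwise disjoint layer blocks, nonempty proper canalizing input sets for the
layer variables, layer constants `B` with the last one nonzero, and a core function
`P_C` of the remaining variables having no 1-canalizing variables. -/
structure LayeredForm (F : Type*) [Field F] [Fintype F] [DecidableEq F] (n r : ℕ) where
  hr : 0 < r
  layer : Fin r → Finset (Fin n)
  disj : ∀ i j : Fin r, i ≠ j → Disjoint (layer i) (layer j)
  S : Fin n → Finset F
  Sne : ∀ i : Fin r, ∀ v ∈ layer i, (S v).Nonempty
  Spr : ∀ i : Fin r, ∀ v ∈ layer i, S v ≠ Finset.univ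
  B : Fin r → F
  Blast : B ⟨r - 1, Nat.sub_lt hr Nat.one_pos⟩ ≠ 0
  PC : (Fin n → F) → F
  PCvars : ∀ i : Fin r, ∀ v ∈ layer i, ¬ DependsOnVar n PC v
  PCnc : ¬ ∃ (v : Fin n) (S' : Finset F) (b : F), OneCanalizing n PC v S' b

/-- The product `M_i = ∏_{v ∈ L_i} Q̃_{S_v}(x_v)` over the `i`-th layer. -/
def LayeredForm.M {F : Type*} [Field F] [Fintype F] [DecidableEq F] {n r : ℕ}
    (L : LayeredForm F n r) (i : Fin r) (x : Fin n → F) : F :=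
  ∏ v ∈ L.layer i, Qt (L.S v) (x v)

/-- The function determined by a layered canalizing form:
`f(x) = M₁(M₂(⋯(M_r · P_C + B_r)⋯) + B₂) + B₁`. -/
def LayeredForm.eval {F : Type*} [Field F] [Fintype F] [DecidableEq F] {n r : ℕ}
    (L : LayeredForm F n r) (x : Fin n → F) : F :=
  nestEval (List.ofFn fun i => (L.M i x, L.B i)) (L.PC x)

/-- The number of state-space transitions changed when the input `s` of `f`
is replaced by the constant `a` (edge deletion when `a = 0`). -/
def chCount {F : Type*} [Fintype F] [DecidableEq F] {n : ℕ}
    (f : (Fin n → F) → F) (s : Fin n) (a : F) : ℕ :=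
  (Finset.univ.filter fun x : Fin n → F => f (Function.update x s a) ≠ f x).card
/-
A changed transition `x` must have `f (x[s := a]) ≠ f x`. Only the factor `M_ℓ` of the nested
form sees the variable `s`, and the form is affine in `M_ℓ` with slope `M_1 ⋯ M_{ℓ-1}`; so
the change forces `M_i(x) ≠ 0` for all `i < ℓ` and `M_ℓ(x[s := a]) ≠ M_ℓ(x)`. The first says
`x_v ∉ S_v` on the earlier layers, the second says the same for the other variables of layer `ℓ`
and that `a` and `x_s` lie on different sides of `S_s`. Hence the changed transitions lie in a
box whose cardinality is the stated bound.
-/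

@[simp]
theorem nestEval_cons {F : Type*} [Mul F] [Add F] (p : F × F) (l : List (F × F)) (P : F) :
    nestEval (p :: l) P = p.1 * nestEval l P + p.2 :=
  rfl

theorem nestEval_ofFn_ne {F : Type*} [MulZeroClass F] [Add F] {r : ℕ}
    {g g' : Fin r → F × F} {ℓ : Fin r} (hg : ∀ i, i ≠ ℓ → g i = g' i) {P : F}
    (h : nestEval (List.ofFn g) P ≠ nestEval (List.ofFn g') P) :
    (∀ i < ℓ, (g i).1 ≠ 0) ∧ g ℓ ≠ g' ℓ := by
  induction r with
  | zero => exact ℓ.elim0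
  | succ r ih =>
    rw [List.ofFn_succ, List.ofFn_succ] at h
    induction ℓ using Fin.cases with
    | zero =>
      have htail : (fun i : Fin r => g i.succ) = fun i => g' i.succ :=
        funext fun i => hg _ (Fin.succ_ne_zero i)
      refine ⟨fun i hi => absurd hi (Fin.not_lt_zero i), fun h0 => h ?_⟩
      rw [h0, htail]
    | succ ℓ =>
      have h0 : g 0 = g' 0 := hg 0 (Fin.succ_ne_zero ℓ).symm
      rw [h0, nestEval_cons, nestEval_cons] at h
      have hhead : (g' 0).1 ≠ 0 := fun hz => h (by rw [hz, zero_mul, zero_mul])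
      obtain ⟨hlt, hℓ⟩ := ih (fun i hi => hg _ ((Fin.succ_injective _).ne hi))
        fun ht => h (by rw [ht])
      refine ⟨fun i hi => ?_, hℓ⟩
      induction i using Fin.cases with
      | zero => rwa [h0]
      | succ i => exact hlt i (Fin.succ_lt_succ_iff.1 hi)

section Qt

variable {F : Type*} [Fintype F] [DecidableEq F]

theorem Qt_ne_zero_iff [Zero F] [One F] [NeZero (1 : F)] {S : Finset F} {x : F} :
    Qt S x ≠ 0 ↔ x ∉ S := by
  unfold Qt
  split_ifs <;> simp_all

theorem Qt_ne_Qt_iff [Zero F] [One F] [NeZero (1 : F)] {S : Finset F} {x y : F} :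
    Qt S x ≠ Qt S y ↔ (x ∈ S ↔ y ∉ S) := by
  unfold Qt
  split_ifs <;> simp_all

theorem prod_Qt_ne_zero_iff [CommMonoidWithZero F] [Nontrivial F] [NoZeroDivisors F]
    {ι : Type*} {I : Finset ι} {S : ι → Finset F} {x : ι → F} :
    ∏ v ∈ I, Qt (S v) (x v) ≠ 0 ↔ ∀ v ∈ I, x v ∉ S v := by
  simp only [prod_ne_zero_iff, Qt_ne_zero_iff]

end Qt

namespace LayeredForm

variable {F : Type*} [Field F] [Fintype F] [DecidableEq F] {n r : ℕ} (L : LayeredForm F n r)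

theorem M_update_of_notMem {i : Fin r} {s : Fin n} (hs : s ∉ L.layer i) (x : Fin n → F) (a : F) :
    L.M i (Function.update x s a) = L.M i x :=
  prod_congr rfl fun v hv => by
    rw [Function.update_of_ne (ne_of_mem_of_not_mem hv hs)]

theorem PC_update {ℓ : Fin r} {s : Fin n} (hs : s ∈ L.layer ℓ) (x : Fin n → F) (a : F) :
    L.PC (Function.update x s a) = L.PC x := by
  by_contra h
  exact L.PCvars ℓ s hs ⟨_, x, fun j hj => Function.update_of_ne hj a x, h⟩

theorem eval_update_ne {ℓ : Fin r} {s : Fin n} (hs : s ∈ L.layer ℓ) {x : Fin n → F} {a : F}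
    (h : L.eval (Function.update x s a) ≠ L.eval x) :
    (∀ i < ℓ, L.M i x ≠ 0) ∧ L.M ℓ (Function.update x s a) ≠ L.M ℓ x := by
  have hM : ∀ i, i ≠ ℓ → L.M i (Function.update x s a) = L.M i x := fun i hi =>
    L.M_update_of_notMem (disjoint_right.1 (L.disj i ℓ hi) hs) x a
  unfold eval at h
  rw [L.PC_update hs] at h
  obtain ⟨hlt, hℓ⟩ := nestEval_ofFn_ne (fun i hi => by rw [hM i hi]) h
  refine ⟨fun i hi => ?_, fun he => hℓ (by rw [he])⟩
  rw [← hM i hi.ne]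
  exact hlt i hi

theorem notMem_of_eval_update_ne {ℓ : Fin r} {s : Fin n} (hs : s ∈ L.layer ℓ)
    {x : Fin n → F} {a : F} (h : L.eval (Function.update x s a) ≠ L.eval x) :
    (∀ i < ℓ, ∀ v ∈ L.layer i, x v ∉ L.S v) ∧ (∀ v ∈ (L.layer ℓ).erase s, x v ∉ L.S v) ∧
      (a ∈ L.S s ↔ x s ∉ L.S s) := by
  obtain ⟨hlt, hℓ⟩ := L.eval_update_ne hs h
  have hrest : ∏ v ∈ (L.layer ℓ).erase s, Qt (L.S v) (Function.update x s a v) =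
      ∏ v ∈ (L.layer ℓ).erase s, Qt (L.S v) (x v) :=
    prod_congr rfl fun v hv => by rw [Function.update_of_ne (ne_of_mem_erase hv)]
  unfold M at hℓ
  rw [← mul_prod_erase _ _ hs, ← mul_prod_erase _ _ hs, hrest,
    Function.update_self] at hℓ
  refine ⟨fun i hi => prod_Qt_ne_zero_iff.1 (hlt i hi), prod_Qt_ne_zero_iff.1 ?_,
    Qt_ne_Qt_iff.1 fun he => hℓ (by rw [he])⟩
  exact fun hz => hℓ (by rw [hz, mul_zero, mul_zero])

def layersUpTo (ℓ : Fin r) : Finset (Fin n) :=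
  (univ.filter fun i => i ≤ ℓ).biUnion L.layer

theorem card_layersUpTo (ℓ : Fin r) :
    (L.layersUpTo ℓ).card = ∑ i ∈ univ.filter (fun i : Fin r => i ≤ ℓ), (L.layer i).card :=
  card_biUnion fun i _ j _ h => L.disj i j h

theorem mem_layersUpTo {ℓ i : Fin r} (hi : i ≤ ℓ) {v : Fin n} (hv : v ∈ L.layer i) :
    v ∈ L.layersUpTo ℓ :=
  mem_biUnion.2 ⟨i, mem_filter.2 ⟨mem_univ _, hi⟩, hv⟩

def changeBox (ℓ : Fin r) (s : Fin n) (a : F) (v : Fin n) : Finset F :=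
  if v = s then (if a ∈ L.S s then (L.S s)ᶜ else L.S s)
  else if v ∈ L.layersUpTo ℓ then (L.S v)ᶜ else univ

theorem filter_eval_update_ne_subset {ℓ : Fin r} {s : Fin n} (hs : s ∈ L.layer ℓ) (a : F) :
    (univ.filter fun x => L.eval (Function.update x s a) ≠ L.eval x) ⊆
      Fintype.piFinset (L.changeBox ℓ s a) := by
  intro x hx
  obtain ⟨hlt, hℓ, hs'⟩ := L.notMem_of_eval_update_ne hs (mem_filter.1 hx).2
  refine Fintype.mem_piFinset.2 fun v => ?_
  unfold changeBox
  split_ifs with hvs ha hvK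
  · subst hvs; simpa [ha] using hs'
  · subst hvs; simpa [ha] using hs'
  · obtain ⟨i, hi, hvi⟩ := mem_biUnion.1 hvK
    rcases (mem_filter.1 hi).2.lt_or_eq with hi | rfl
    · exact mem_compl.2 (hlt i hi v hvi)
    · exact mem_compl.2 (hℓ v (mem_erase.2 ⟨hvs, hvi⟩))
  · exact mem_univ _

theorem card_changeBox_self (ℓ : Fin r) (s : Fin n) (a : F) :
    (L.changeBox ℓ s a s).card =
      Fintype.card F - if a ∈ L.S s then (L.S s).card else Fintype.card F - (L.S s).card := by
  rw [changeBox, if_pos rfl]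
  split_ifs
  · exact card_compl _
  · exact (Nat.sub_sub_self (card_le_univ _)).symm

theorem card_changeBox_of_ne {ℓ : Fin r} {s v : Fin n} (a : F) (hv : v ∈ L.layersUpTo ℓ)
    (hvs : v ≠ s) : (L.changeBox ℓ s a v).card = Fintype.card F - (L.S v).card := by
  simp only [changeBox, if_neg hvs, if_pos hv, card_compl]

theorem prod_card_changeBox {ℓ : Fin r} {s : Fin n} (hs : s ∈ L.layer ℓ) (a : F) :
    ∏ v, (L.changeBox ℓ s a v).card =
      Fintype.card F ^ (n - (L.layersUpTo ℓ).card) *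
        (∏ i ∈ univ.filter (fun i : Fin r => i < ℓ),
          ∏ v ∈ L.layer i, (Fintype.card F - (L.S v).card)) *
        (∏ v ∈ (L.layer ℓ).erase s, (Fintype.card F - (L.S v).card)) *
        (Fintype.card F -
          if a ∈ L.S s then (L.S s).card else Fintype.card F - (L.S s).card) := by
  have houtside : ∏ v ∈ (L.layersUpTo ℓ)ᶜ, (L.changeBox ℓ s a v).card =
      Fintype.card F ^ (n - (L.layersUpTo ℓ).card) := by
    have hcard : ∀ v ∈ (L.layersUpTo ℓ)ᶜ, (L.changeBox ℓ s a v).card = Fintype.card F := by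
      intro v hv
      have hvK := mem_compl.1 hv
      have hvs : v ≠ s := fun h => hvK (h ▸ L.mem_layersUpTo le_rfl hs)
      simp only [changeBox, if_neg hvs, if_neg hvK, card_univ]
    rw [prod_congr rfl hcard, prod_const, card_compl, Fintype.card_fin]
  have hlayer : ∏ v ∈ L.layer ℓ, (L.changeBox ℓ s a v).card =
      (∏ v ∈ (L.layer ℓ).erase s, (Fintype.card F - (L.S v).card)) *
        (Fintype.card F - if a ∈ L.S s then (L.S s).card else Fintype.card F - (L.S s).card) := by
    rw [← prod_erase_mul _ _ hs, L.card_changeBox_self]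
    congr 1
    exact prod_congr rfl fun v hv =>
      L.card_changeBox_of_ne a (L.mem_layersUpTo le_rfl (mem_of_mem_erase hv))
        (ne_of_mem_erase hv)
  have hearlier : ∀ i ∈ univ.filter (fun i : Fin r => i < ℓ),
      ∏ v ∈ L.layer i, (L.changeBox ℓ s a v).card =
        ∏ v ∈ L.layer i, (Fintype.card F - (L.S v).card) := fun i hi =>
    have hi : i < ℓ := (mem_filter.1 hi).2
    prod_congr rfl fun v hv => L.card_changeBox_of_ne a (L.mem_layersUpTo hi.le hv)
      fun h => disjoint_left.1 (L.disj i ℓ hi.ne) hv (h ▸ hs)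
  have hIic : univ.filter (fun i : Fin r => i ≤ ℓ) =
      insert ℓ (univ.filter fun i : Fin r => i < ℓ) := by
    rw [filter_ge_eq_Iic, filter_gt_eq_Iio, Iio_insert]
  rw [← prod_mul_prod_compl (L.layersUpTo ℓ), houtside, layersUpTo,
    prod_biUnion fun i _ j _ h => L.disj i j h, hIic,
    prod_insert (by simp), hlayer, prod_congr rfl hearlier]
  ring

end LayeredForm

/-- Bound on the number of changed transitions for the constant expression
of the variable `s` (in the `ℓ`-th layer) to the value `a`. -/
theorem stmt8 {F : Type*} [Field F] [Fintype F] [DecidableEq F] {n r : ℕ}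
    (f : (Fin n → F) → F) (L : LayeredForm F n r) (hf : f = L.eval)
    (ℓ : Fin r) (s : Fin n) (hs : s ∈ L.layer ℓ) (a : F) :
    chCount f s a ≤
      Fintype.card F ^ (n - ∑ i ∈ Finset.univ.filter (fun i : Fin r => i ≤ ℓ), (L.layer i).card) *
        (∏ i ∈ Finset.univ.filter (fun i : Fin r => i < ℓ),
          ∏ v ∈ L.layer i, (Fintype.card F - (L.S v).card)) *
        (∏ v ∈ (L.layer ℓ).erase s, (Fintype.card F - (L.S v).card)) *
        (Fintype.card F -
          if a ∈ L.S s then (L.S s).card else Fintype.card F - (L.S s).card) := by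
  subst hf
  rw [← L.card_layersUpTo, ← L.prod_card_changeBox hs, ← Fintype.card_piFinset]
  exact Finset.card_le_card (L.filter_eval_update_ne_subset hs a)
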